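/- arXiv:2107.12023 — 5 statements merged into one kernel-verified Lean document; each statement's English description precedes it below -/
import Mathlib

section
/- Let l : [0,1] → ℝ≥0 be continuous, non-decreasing, with left derivative l', and let α : [0,1] → ℝ≥0 be non-increasing. Define the social cost SC(x) = l(x) + ∫_x^1 α(z) dz. If l' is non-decreasing and x̂ ∈ (0,1) satisfies α(x̂⁻) ≥ l'(x̂) ≥ α(x̂⁺) (limits from left and right of α at x̂), then SC(x̂) = min_{x∈[0,1]} SC(x). -/
open Set MeasureTheory

/-!
Since `SC x - SC x̂ = l x - l x̂ + ∫_x^x̂ α`, it suffices that `l x̂ - l x ≤ ∫_x^x̂ α`. For `x < x̂`,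
monotonicity of `l'` and the mean value inequality for left derivatives give
`l x̂ - l x ≤ l'(x̂) (x̂ - x)`, and the equilibrium condition `α ≥ l'(x̂)` on `(x, x̂)` bounds this by
the integral. For `x > x̂` both inequalities reverse, using `α ≤ l'(x̂)` on `(x̂, x)`.
-/

/-- Social cost: `SC(x) = l(x) + ∫_x^1 α(z) dz`. -/
noncomputable def SC (l α : ℝ → ℝ) (x : ℝ) : ℝ := l x + ∫ z in x..(1:ℝ), α z

/-- Left limit value `α(x⁻) = inf {α(t) | 0 ≤ t < x}` (with convention `α(0⁻) = +∞`). -/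
noncomputable def leftLimE (α : ℝ → ℝ) (x : ℝ) : EReal := ⨅ t ∈ Set.Ico (0:ℝ) x, (α t : EReal)

/-- Right limit value `α(x⁺) = sup {α(t) | x < t ≤ 1}` (with convention `α(1⁺) = -∞`). -/
noncomputable def rightLimE (α : ℝ → ℝ) (x : ℝ) : EReal := ⨆ t ∈ Set.Ioc x (1:ℝ), (α t : EReal)

theorem image_sub_le_mul_sub_of_deriv_left_le {f f' : ℝ → ℝ} {a b C : ℝ} (hab : a ≤ b)
    (hf : ContinuousOn f (Icc a b))
    (hf' : ∀ t ∈ Ioc a b, HasDerivWithinAt f (f' t) (Iic t) t)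
    (bound : ∀ t ∈ Ioc a b, f' t ≤ C) :
    f b - f a ≤ C * (b - a) := by
  -- Reflect `t ↦ -t` to turn left derivatives into right derivatives.
  have hmaps : MapsTo Neg.neg (Icc (-b) (-a)) (Icc a b) :=
    fun s hs ↦ ⟨le_neg.mp hs.2, neg_le.mp hs.1⟩
  have hφ : ContinuousOn (fun s ↦ -f (-s)) (Icc (-b) (-a)) :=
    (hf.comp continuousOn_neg hmaps).neg
  have hφ' : ∀ s ∈ Ico (-b) (-a), HasDerivWithinAt (fun s ↦ -f (-s)) (f' (-s)) (Ici s) s := by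
    intro s hs
    have hmem : -s ∈ Ioc a b := ⟨lt_neg.mp hs.2, neg_le.mp hs.1⟩
    have hcomp := (hf' (-s) hmem).comp s (hasDerivAt_neg s).hasDerivWithinAt
      (fun _ hu ↦ mem_Iic.mpr (neg_le_neg hu) : MapsTo Neg.neg (Ici s) (Iic (-s)))
    have h := hcomp.neg
    rw [mul_neg, mul_one, neg_neg] at h
    exact h
  have key := image_le_of_deriv_right_le_deriv_boundary hφ hφ' (B := fun s ↦ -f b + C * (s + b))
    (by simp) (by fun_prop)
    (fun s _ ↦ by simpa using ((hasDerivAt_id s).add_const b).const_mul C |>.const_add (-f b)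
      |>.hasDerivWithinAt)
    (fun s hs ↦ bound (-s) ⟨lt_neg.mp hs.2, neg_le.mp hs.1⟩)
    (right_mem_Icc.mpr (neg_le_neg hab))
  simp only [neg_neg] at key
  linarith

theorem mul_sub_le_image_sub_of_le_deriv_left {f f' : ℝ → ℝ} {a b C : ℝ} (hab : a ≤ b)
    (hf : ContinuousOn f (Icc a b))
    (hf' : ∀ t ∈ Ioc a b, HasDerivWithinAt f (f' t) (Iic t) t)
    (bound : ∀ t ∈ Ioc a b, C ≤ f' t) :
    C * (b - a) ≤ f b - f a := by
  have := image_sub_le_mul_sub_of_deriv_left_le (f := fun t ↦ -f t) (f' := fun t ↦ -f' t)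
    (C := -C) hab hf.neg (fun t ht ↦ (hf' t ht).neg) (fun t ht ↦ neg_le_neg (bound t ht))
  linarith

theorem coe_le_leftLimE_iff {α : ℝ → ℝ} {x c : ℝ} :
    (c : EReal) ≤ leftLimE α x ↔ ∀ t ∈ Ico 0 x, c ≤ α t := by
  simp only [leftLimE, le_iInf₂_iff, EReal.coe_le_coe_iff]

theorem rightLimE_le_coe_iff {α : ℝ → ℝ} {x c : ℝ} :
    rightLimE α x ≤ (c : EReal) ↔ ∀ t ∈ Ioc x 1, α t ≤ c := by
  simp only [rightLimE, iSup₂_le_iff, EReal.coe_le_coe_iff]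

theorem SC_sub_SC {l α : ℝ → ℝ} {x y : ℝ} (hxy : IntervalIntegrable α volume x y)
    (hy : IntervalIntegrable α volume y 1) :
    SC l α x - SC l α y = l x - l y + ∫ z in x..y, α z := by
  rw [SC, SC, ← intervalIntegral.integral_add_adjacent_intervals hxy hy]
  ring

theorem sub_le_integral_of_deriv_left_le_of_le {l l' α : ℝ → ℝ} {a b c : ℝ} (hab : a ≤ b)
    (hl : ContinuousOn l (Icc a b))
    (hl' : ∀ t ∈ Ioc a b, HasDerivWithinAt l (l' t) (Iic t) t)
    (hl'c : ∀ t ∈ Ioc a b, l' t ≤ c)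
    (hα : IntervalIntegrable α volume a b) (hcα : ∀ t ∈ Ioo a b, c ≤ α t) :
    l b - l a ≤ ∫ t in a..b, α t :=
  calc l b - l a ≤ c * (b - a) := image_sub_le_mul_sub_of_deriv_left_le hab hl hl' hl'c
    _ = ∫ _ in a..b, c := by simp [mul_comm]
    _ ≤ ∫ t in a..b, α t := intervalIntegral.integral_mono_on_of_le_Ioo hab
        intervalIntegrable_const hα hcα

theorem integral_le_sub_of_le_deriv_left_of_le {l l' α : ℝ → ℝ} {a b c : ℝ} (hab : a ≤ b)
    (hl : ContinuousOn l (Icc a b))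
    (hl' : ∀ t ∈ Ioc a b, HasDerivWithinAt l (l' t) (Iic t) t)
    (hl'c : ∀ t ∈ Ioc a b, c ≤ l' t)
    (hα : IntervalIntegrable α volume a b) (hαc : ∀ t ∈ Ioo a b, α t ≤ c) :
    ∫ t in a..b, α t ≤ l b - l a :=
  calc ∫ t in a..b, α t ≤ ∫ _ in a..b, c := intervalIntegral.integral_mono_on_of_le_Ioo hab
        hα intervalIntegrable_const hαc
    _ = c * (b - a) := by simp [mul_comm]
    _ ≤ l b - l a := mul_sub_le_image_sub_of_le_deriv_left hab hl hl' hl'c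

theorem pigou_equilibrium_is_optimal_general
    (l l' α : ℝ → ℝ)
    (hl_cont : ContinuousOn l (Icc 0 1))
    (hl_deriv : ∀ x ∈ Ioc (0:ℝ) 1, HasDerivWithinAt l (l' x) (Iic x) x)
    (hl'_mono : MonotoneOn l' (Icc 0 1))
    (hα_anti : AntitoneOn α (Icc 0 1))
    (xh : ℝ) (hxh : xh ∈ Ioo (0:ℝ) 1)
    (heq_left : (l' xh : EReal) ≤ leftLimE α xh)
    (heq_right : rightLimE α xh ≤ (l' xh : EReal)) :
    ∀ x ∈ Icc (0:ℝ) 1, SC l α xh ≤ SC l α x := by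
  have hxh' : xh ∈ Icc (0:ℝ) 1 := Ioo_subset_Icc_self hxh
  have hint : ∀ a ∈ Icc (0:ℝ) 1, ∀ b ∈ Icc (0:ℝ) 1, IntervalIntegrable α volume a b :=
    fun a ha b hb ↦ (hα_anti.mono (uIcc_subset_Icc ha hb)).intervalIntegrable
  intro x hx
  suffices l xh - l x ≤ ∫ z in x..xh, α z by
    have := SC_sub_SC (l := l) (hint x hx xh hxh') (hint xh hxh' 1 (right_mem_Icc.mpr zero_le_one))
    linarith
  rcases le_total x xh with hle | hle
  · have hI : Ioc x xh ⊆ Ioc 0 1 := Ioc_subset_Ioc hx.1 hxh'.2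
    exact sub_le_integral_of_deriv_left_le_of_le hle
      (hl_cont.mono (Icc_subset_Icc hx.1 hxh'.2)) (fun t ht ↦ hl_deriv t (hI ht))
      (fun t ht ↦ hl'_mono (Ioc_subset_Icc_self (hI ht)) hxh' ht.2) (hint x hx xh hxh')
      (fun t ht ↦ coe_le_leftLimE_iff.mp heq_left t ⟨hx.1.trans ht.1.le, ht.2⟩)
  · have hI : Ioc xh x ⊆ Ioc 0 1 := Ioc_subset_Ioc hxh'.1 hx.2
    have := integral_le_sub_of_le_deriv_left_of_le hle
      (hl_cont.mono (Icc_subset_Icc hxh'.1 hx.2)) (fun t ht ↦ hl_deriv t (hI ht))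
      (fun t ht ↦ hl'_mono hxh' (Ioc_subset_Icc_self (hI ht)) ht.1.le) (hint xh hxh' x hx)
      (fun t ht ↦ rightLimE_le_coe_iff.mp heq_right t ⟨ht.1, ht.2.le.trans hx.2⟩)
    rw [intervalIntegral.integral_symm]
    linarith

/-- Pigou: if the externality derivative is non-decreasing, any equilibrium
`xh` of the Pigouvian tax minimizes the social cost. -/
theorem pigou_equilibrium_is_optimal
    (l l' α : ℝ → ℝ)
    (hl_cont : ContinuousOn l (Icc 0 1))
    (hl_mono : MonotoneOn l (Icc 0 1))
    (hl_nonneg : ∀ x ∈ Icc (0:ℝ) 1, 0 ≤ l x)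
    (hl_deriv : ∀ x ∈ Ioc (0:ℝ) 1, HasDerivWithinAt l (l' x) (Iic x) x)
    (hl'_mono : MonotoneOn l' (Icc 0 1))
    (hα_anti : AntitoneOn α (Icc 0 1))
    (hα_nonneg : ∀ x ∈ Icc (0:ℝ) 1, 0 ≤ α x)
    (xh : ℝ) (hxh : xh ∈ Ioo (0:ℝ) 1)
    (heq_left : (l' xh : EReal) ≤ leftLimE α xh)
    (heq_right : rightLimE α xh ≤ (l' xh : EReal)) :
    ∀ x ∈ Icc (0:ℝ) 1, SC l α xh ≤ SC l α x :=
  pigou_equilibrium_is_optimal_general l l' α hl_cont hl_deriv hl'_mono hα_anti xh hxh heq_left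
    heq_right
end

section
/- Let γ ≥ 1, let l : [0,1] → ℝ≥0 be non-decreasing and continuous with left derivative l', and suppose there is a non-decreasing integrable function L' : [0,1] → ℝ>0 with 1 ≤ l'(x)/L'(x) ≤ γ for all x ∈ [0,1]. Set the tax t(x) = L'(x), and SC(x) = l(0) + ∫_0^x l'(z) dz + ∫_x^1 α(z) dz for any non-increasing α : [0,1] → ℝ≥0. Then for every equilibrium point x̂ (i.e., α(x̂⁻) ≥ L'(x̂) ≥ α(x̂⁺)) and every x* minimizing SC, we have SC(x̂) ≤ γ · SC(x*). -/
open Set MeasureTheory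

/-- Social cost via the derivative form: `SC(x) = l(0) + ∫_0^x l' + ∫_x^1 α`. -/
noncomputable def SCd (l0 : ℝ) (l' α : ℝ → ℝ) (x : ℝ) : ℝ :=
  l0 + (∫ z in (0:ℝ)..x, l' z) + ∫ z in x..(1:ℝ), α z

/-! Both social costs differ only by `∫ (l' - α)` between `x̂` and `x*`. To the right of `x̂` the
equilibrium gives `α ≤ L'(x̂) ≤ L' ≤ l'`, so `SC(x̂) ≤ SC(x*)` when `x̂ ≤ x*`. To its left
`l' ≤ γ L' ≤ γ L'(x̂) ≤ γ α`, so when `x* < x̂` the excess `SC(x̂) - SC(x*)` is at most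
`(γ - 1) ∫_{x*}^{x̂} α ≤ (γ - 1) SC(x*)`. Being a one-sided derivative, `l'` is measurable, and
`L' ≤ l' ≤ γ L'` makes it integrable. -/

theorem IntervalIntegrable.mono_set_Icc {E : Type*} [NormedAddCommGroup E] {f : ℝ → E}
    {μ : Measure ℝ} {a b x y : ℝ} (hf : IntervalIntegrable f μ a b) (hx : x ∈ Icc a b)
    (hy : y ∈ Icc a b) : IntervalIntegrable f μ x y :=
  hf.mono_set (uIcc_subset_uIcc (Icc_subset_uIcc hx) (Icc_subset_uIcc hy))

section LeftDerivative

variable {F : Type*} [NormedAddCommGroup F] [NormedSpace ℝ F] [CompleteSpace F]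

theorem stronglyMeasurable_derivWithin_Iic (f : ℝ → F) :
    StronglyMeasurable fun x => derivWithin f (Iic x) x := by
  have hreflect : (fun x => derivWithin f (Iic x) x) =
      fun x => -derivWithin (fun y => f (-y)) (Ici (-x)) (-x) := by
    ext x
    rw [derivWithin_comp_neg, neg_Ici, neg_neg, neg_neg]
  rw [hreflect]
  exact ((stronglyMeasurable_derivWithin_Ici _).comp_measurable measurable_neg).neg

theorem aestronglyMeasurable_of_hasDerivWithinAt_Iic {f f' : ℝ → F} {s : Set ℝ}
    {μ : Measure ℝ} (hs : MeasurableSet s) (hf : ∀ x ∈ s, HasDerivWithinAt f (f' x) (Iic x) x) :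
    AEStronglyMeasurable f' (μ.restrict s) :=
  (stronglyMeasurable_derivWithin_Iic f).aestronglyMeasurable.congr <|
    (ae_restrict_iff' hs).2 <| ae_of_all _ fun x hx =>
      (hf x hx).derivWithin (uniqueDiffOn_Iic x x self_mem_Iic)

end LeftDerivative

theorem le_of_le_leftLimE {α : ℝ → ℝ} {x c t : ℝ} (h : (c : EReal) ≤ leftLimE α x)
    (ht : t ∈ Ico 0 x) : c ≤ α t :=
  EReal.coe_le_coe_iff.1 (h.trans (iInf₂_le t ht))

theorem le_of_rightLimE_le {α : ℝ → ℝ} {x c t : ℝ} (h : rightLimE α x ≤ c)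
    (ht : t ∈ Ioc x 1) : α t ≤ c :=
  EReal.coe_le_coe_iff.1 ((le_iSup₂ (f := fun t (_ : t ∈ Ioc x 1) => (α t : EReal)) t ht).trans h)

section SocialCost

variable {l0 γ x y : ℝ} {l' α : ℝ → ℝ}

theorem SCd_sub_SCd (hl' : IntervalIntegrable l' volume 0 1)
    (hα : IntervalIntegrable α volume 0 1) (hx : x ∈ Icc 0 1) (hy : y ∈ Icc 0 1) :
    SCd l0 l' α y - SCd l0 l' α x = (∫ z in x..y, l' z) - ∫ z in x..y, α z := by
  have h0 : (0 : ℝ) ∈ Icc 0 1 := left_mem_Icc.2 zero_le_one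
  have h1 : (1 : ℝ) ∈ Icc 0 1 := right_mem_Icc.2 zero_le_one
  unfold SCd
  rw [← intervalIntegral.integral_add_adjacent_intervals (hl'.mono_set_Icc h0 hx)
      (hl'.mono_set_Icc hx hy),
    ← intervalIntegral.integral_add_adjacent_intervals (hα.mono_set_Icc hx hy)
      (hα.mono_set_Icc hy h1)]
  ring

theorem integral_le_SCd (hl0 : 0 ≤ l0) (hl'_nonneg : ∀ z ∈ Icc 0 1, 0 ≤ l' z)
    (hα_nonneg : ∀ z ∈ Icc 0 1, 0 ≤ α z) (hα : IntervalIntegrable α volume 0 1)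
    (hx : x ∈ Icc 0 1) (hy : y ∈ Icc 0 1) :
    ∫ z in y..x, α z ≤ SCd l0 l' α y := by
  have hl'y : 0 ≤ ∫ z in 0..y, l' z :=
    intervalIntegral.integral_nonneg hy.1 fun z hz => hl'_nonneg z ⟨hz.1, hz.2.trans hy.2⟩
  have hαx : 0 ≤ ∫ z in x..1, α z :=
    intervalIntegral.integral_nonneg hx.2 fun z hz => hα_nonneg z ⟨hx.1.trans hz.1, hz.2⟩
  have hsplit := intervalIntegral.integral_add_adjacent_intervals (hα.mono_set_Icc hy hx)
    (hα.mono_set_Icc hx (right_mem_Icc.2 zero_le_one))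
  unfold SCd
  linarith

theorem SCd_nonneg (hl0 : 0 ≤ l0) (hl'_nonneg : ∀ z ∈ Icc 0 1, 0 ≤ l' z)
    (hα_nonneg : ∀ z ∈ Icc 0 1, 0 ≤ α z) (hα : IntervalIntegrable α volume 0 1)
    (hx : x ∈ Icc 0 1) : 0 ≤ SCd l0 l' α x := by
  simpa using integral_le_SCd hl0 hl'_nonneg hα_nonneg hα hx hx

theorem SCd_le_SCd_of_le (hl' : IntervalIntegrable l' volume 0 1)
    (hα : IntervalIntegrable α volume 0 1) (hx : x ∈ Icc 0 1) (hy : y ∈ Icc 0 1) (hxy : x ≤ y)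
    (h : ∀ z ∈ Ioo x y, α z ≤ l' z) : SCd l0 l' α x ≤ SCd l0 l' α y := by
  have hdiff := SCd_sub_SCd (l0 := l0) hl' hα hx hy
  have hint : ∫ z in x..y, α z ≤ ∫ z in x..y, l' z :=
    intervalIntegral.integral_mono_on_of_le_Ioo hxy (hα.mono_set_Icc hx hy)
      (hl'.mono_set_Icc hx hy) h
  linarith

theorem SCd_le_mul_SCd_of_ge (hγ : 1 ≤ γ) (hl0 : 0 ≤ l0) (hl'_nonneg : ∀ z ∈ Icc 0 1, 0 ≤ l' z)
    (hα_nonneg : ∀ z ∈ Icc 0 1, 0 ≤ α z) (hl' : IntervalIntegrable l' volume 0 1)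
    (hα : IntervalIntegrable α volume 0 1) (hx : x ∈ Icc 0 1) (hy : y ∈ Icc 0 1) (hyx : y ≤ x)
    (h : ∀ z ∈ Ioo y x, l' z ≤ γ * α z) : SCd l0 l' α x ≤ γ * SCd l0 l' α y := by
  have hdiff := SCd_sub_SCd (l0 := l0) hl' hα hy hx
  have hint : ∫ z in y..x, l' z ≤ γ * ∫ z in y..x, α z := by
    rw [← intervalIntegral.integral_const_mul]
    exact intervalIntegral.integral_mono_on_of_le_Ioo hyx (hl'.mono_set_Icc hy hx)
      ((hα.mono_set_Icc hy hx).const_mul γ) h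
  have hαyx : ∫ z in y..x, α z ≤ SCd l0 l' α y :=
    integral_le_SCd hl0 hl'_nonneg hα_nonneg hα hx hy
  linarith [mul_le_mul_of_nonneg_left hαyx (sub_nonneg.2 hγ)]

theorem SCd_le_mul_SCd (hγ : 1 ≤ γ) (hl0 : 0 ≤ l0) (hl'_nonneg : ∀ z ∈ Icc 0 1, 0 ≤ l' z)
    (hα_nonneg : ∀ z ∈ Icc 0 1, 0 ≤ α z) (hl' : IntervalIntegrable l' volume 0 1)
    (hα : IntervalIntegrable α volume 0 1) (hx : x ∈ Icc 0 1) (hy : y ∈ Icc 0 1)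
    (hleft : ∀ z ∈ Ico 0 x, l' z ≤ γ * α z) (hright : ∀ z ∈ Ioc x 1, α z ≤ l' z) :
    SCd l0 l' α x ≤ γ * SCd l0 l' α y := by
  rcases le_total x y with hxy | hyx
  · calc SCd l0 l' α x
        ≤ SCd l0 l' α y := SCd_le_SCd_of_le hl' hα hx hy hxy fun z hz =>
          hright z ⟨hz.1, hz.2.le.trans hy.2⟩
      _ ≤ γ * SCd l0 l' α y :=
          le_mul_of_one_le_left (SCd_nonneg hl0 hl'_nonneg hα_nonneg hα hy) hγ
  · exact SCd_le_mul_SCd_of_ge hγ hl0 hl'_nonneg hα_nonneg hl' hα hx hy hyx fun z hz =>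
      hleft z ⟨hy.1.trans hz.1.le, hz.2⟩

end SocialCost

theorem gamma_approx_increasing_poa_general
    (γ : ℝ) (hγ : 1 ≤ γ)
    (l l' L' α : ℝ → ℝ)
    (hl_nonneg : ∀ x ∈ Icc (0:ℝ) 1, 0 ≤ l x)
    (hl_deriv : ∀ x ∈ Ioc (0:ℝ) 1, HasDerivWithinAt l (l' x) (Iic x) x)
    (hL'_mono : MonotoneOn L' (Icc 0 1))
    (hL'_pos : ∀ x ∈ Icc (0:ℝ) 1, 0 < L' x)
    (hL'_int : IntervalIntegrable L' volume 0 1)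
    (hratio : ∀ x ∈ Icc (0:ℝ) 1, 1 ≤ l' x / L' x ∧ l' x / L' x ≤ γ)
    (hα_anti : AntitoneOn α (Icc 0 1))
    (hα_nonneg : ∀ x ∈ Icc (0:ℝ) 1, 0 ≤ α x)
    (xh : ℝ) (hxh : xh ∈ Icc (0:ℝ) 1)
    (heq_left : (L' xh : EReal) ≤ leftLimE α xh)
    (heq_right : rightLimE α xh ≤ (L' xh : EReal))
    (xstar : ℝ) (hxstar : xstar ∈ Icc (0:ℝ) 1) :
    SCd (l 0) l' α xh ≤ γ * SCd (l 0) l' α xstar := by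
  have hsandwich : ∀ z ∈ Icc (0:ℝ) 1, L' z ≤ l' z ∧ l' z ≤ γ * L' z := fun z hz =>
    ⟨(one_le_div (hL'_pos z hz)).1 (hratio z hz).1, (div_le_iff₀ (hL'_pos z hz)).1 (hratio z hz).2⟩
  have hl'_int : IntervalIntegrable l' volume 0 1 := by
    refine (hL'_int.const_mul γ).mono_fun' ?_ ?_ <;> rw [uIoc_of_le zero_le_one]
    · exact aestronglyMeasurable_of_hasDerivWithinAt_Iic measurableSet_Ioc hl_deriv
    · refine (ae_restrict_iff' measurableSet_Ioc).2 (ae_of_all _ fun z hz => ?_)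
      have hz' : z ∈ Icc (0:ℝ) 1 := Ioc_subset_Icc_self hz
      dsimp only
      rw [Real.norm_of_nonneg ((hL'_pos z hz').le.trans (hsandwich z hz').1)]
      exact (hsandwich z hz').2
  have hα_int : IntervalIntegrable α volume 0 1 :=
    (hα_anti.mono (uIcc_of_le zero_le_one).subset).intervalIntegrable
  refine SCd_le_mul_SCd hγ (hl_nonneg 0 (left_mem_Icc.2 zero_le_one))
    (fun z hz => (hL'_pos z hz).le.trans (hsandwich z hz).1) hα_nonneg hl'_int hα_int hxh hxstar
    (fun z hz => ?_) (fun z hz => ?_)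
  · have hz' : z ∈ Icc (0:ℝ) 1 := ⟨hz.1, hz.2.le.trans hxh.2⟩
    calc l' z ≤ γ * L' z := (hsandwich z hz').2
      _ ≤ γ * L' xh := by gcongr; exact hL'_mono hz' hxh hz.2.le
      _ ≤ γ * α z := by gcongr; exact le_of_le_leftLimE heq_left hz
  · have hz' : z ∈ Icc (0:ℝ) 1 := ⟨hxh.1.trans hz.1.le, hz.2⟩
    calc α z ≤ L' xh := le_of_rightLimE_le heq_right hz
      _ ≤ L' z := hL'_mono hxh hz' hz.1.le
      _ ≤ l' z := (hsandwich z hz').1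

/-- If `l'` is `γ`-approximately weakly increasing with `L'`, then under the tax
`t = L'` every equilibrium has social cost at most `γ` times the optimum. -/
theorem gamma_approx_increasing_poa
    (γ : ℝ) (hγ : 1 ≤ γ)
    (l l' L' α : ℝ → ℝ)
    (hl_mono : MonotoneOn l (Icc 0 1))
    (hl_cont : ContinuousOn l (Icc 0 1))
    (hl_nonneg : ∀ x ∈ Icc (0:ℝ) 1, 0 ≤ l x)
    (hl_deriv : ∀ x ∈ Ioc (0:ℝ) 1, HasDerivWithinAt l (l' x) (Iic x) x)
    (hL'_mono : MonotoneOn L' (Icc 0 1))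
    (hL'_pos : ∀ x ∈ Icc (0:ℝ) 1, 0 < L' x)
    (hL'_int : IntervalIntegrable L' volume 0 1)
    (hratio : ∀ x ∈ Icc (0:ℝ) 1, 1 ≤ l' x / L' x ∧ l' x / L' x ≤ γ)
    (hα_anti : AntitoneOn α (Icc 0 1))
    (hα_nonneg : ∀ x ∈ Icc (0:ℝ) 1, 0 ≤ α x)
    (xh : ℝ) (hxh : xh ∈ Icc (0:ℝ) 1)
    (heq_left : (L' xh : EReal) ≤ leftLimE α xh)
    (heq_right : rightLimE α xh ≤ (L' xh : EReal))
    (xstar : ℝ) (hxstar : xstar ∈ Icc (0:ℝ) 1)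
    (hxstar_min : ∀ x ∈ Icc (0:ℝ) 1, SCd (l 0) l' α xstar ≤ SCd (l 0) l' α x) :
    SCd (l 0) l' α xh ≤ γ * SCd (l 0) l' α xstar :=
  gamma_approx_increasing_poa_general γ hγ l l' L' α hl_nonneg hl_deriv hL'_mono hL'_pos hL'_int
    hratio hα_anti hα_nonneg xh hxh heq_left heq_right xstar hxstar
end

section
/- Ride sharing Pigou theorem: fix κ, τ ∈ [0,1) and κ(x) = (1-κ)x + κ. Let l : [0,1] → ℝ≥0 be continuous, non-decreasing with non-decreasing left derivative l', and α non-increasing, non-negative. Set the toll t(x) = ((1-κ)/(1-τ))·l'(x) and SC(x) = l(κ(x)) + ∫_x^1 α(z) dz. Then every equilibrium x̂ (i.e., α(x̂⁻) ≥ (1-κ)·l'(κ(x̂)) ≥ α(x̂⁺)) minimizes SC over [0,1]. -/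
open Set MeasureTheory

/-- Road load with ride-sharing technology parameter `κ`: `κ(x) = (1-κ)x + κ`. -/
def kload (κ x : ℝ) : ℝ := (1 - κ) * x + κ

/-- Ride-sharing social cost: `SC(x) = l(κ(x)) + ∫_x^1 α(z) dz`. -/
noncomputable def SCrs (κ : ℝ) (l α : ℝ → ℝ) (x : ℝ) : ℝ :=
  l (kload κ x) + ∫ z in x..(1:ℝ), α z

/-! Put `c = (1 - κ) l'(κ(x̂))`. The equilibrium conditions say `α ≥ c` on `[0, x̂)` and
`α ≤ c` on `(x̂, 1]`, and since the left derivative `l'` is non-decreasing,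
`l'(a)(b - a) ≤ l(b) - l(a) ≤ l'(b)(b - a)` for `a ≤ b`. Moving from `x̂` to `x > x̂` therefore
raises `l(κ(·))` by at least `c (x - x̂)` and lowers `∫_·^1 α` by at most that much; moving
to `x < x̂` lowers `l(κ(·))` by at most `c (x̂ - x)` and raises the integral by at least that. -/

theorem le_of_hasDerivWithinAt_Iic_nonneg {f f' : ℝ → ℝ} {a b : ℝ} (hab : a ≤ b)
    (hf : ContinuousOn f (Icc a b))
    (hf' : ∀ x ∈ Ioc a b, HasDerivWithinAt f (f' x) (Iic x) x)
    (hf'₀ : ∀ x ∈ Ioc a b, 0 ≤ f' x) : f a ≤ f b := by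
  -- `y ↦ f (-y)` has right derivative `-f' (-y) ≤ 0` on `[-b, -a)`, so it stays below `f b`.
  have hg : ContinuousOn (fun y => f (-y)) (Icc (-b) (-a)) :=
    hf.comp continuous_neg.continuousOn fun y hy => ⟨le_neg_of_le_neg hy.2, neg_le_of_neg_le hy.1⟩
  have hg' : ∀ y ∈ Ico (-b) (-a),
      HasDerivWithinAt (fun y => f (-y)) (f' (-y) * -1) (Ici y) y := fun y hy =>
    (hf' (-y) ⟨lt_neg_of_lt_neg hy.2, neg_le_of_neg_le hy.1⟩).comp y
      (hasDerivAt_neg y).hasDerivWithinAt fun _ hz => neg_le_neg (α := ℝ) hz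
  have hbound := image_le_of_deriv_right_le_deriv_boundary hg hg' (B := fun _ => f b)
    (B' := fun _ => 0) (by simp) continuousOn_const (fun y _ => hasDerivWithinAt_const y _ _)
    (fun y hy => by
      have := hf'₀ (-y) ⟨lt_neg_of_lt_neg hy.2, neg_le_of_neg_le hy.1⟩
      linarith)
    (right_mem_Icc.2 (neg_le_neg hab))
  simpa using hbound

theorem mul_sub_le_sub_of_leftDeriv_monotoneOn {f f' : ℝ → ℝ} {p q a b : ℝ}
    (hf : ContinuousOn f (Icc p q)) (hf' : ∀ x ∈ Ioc p q, HasDerivWithinAt f (f' x) (Iic x) x)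
    (hmono : MonotoneOn f' (Icc p q)) (hpa : p ≤ a) (hab : a ≤ b) (hbq : b ≤ q) :
    f' a * (b - a) ≤ f b - f a := by
  have key := le_of_hasDerivWithinAt_Iic_nonneg (f := fun y => f y - f' a * y)
    (f' := fun y => f' y - f' a) hab
    ((hf.mono (Icc_subset_Icc hpa hbq)).sub (continuous_const.mul continuous_id).continuousOn)
    (fun y hy => (hf' y ⟨hpa.trans_lt hy.1, hy.2.trans hbq⟩).sub
      ((hasDerivAt_id y).const_mul (f' a)).hasDerivWithinAt |>.congr_deriv (by ring))
    (fun y hy => sub_nonneg.2 <|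
      hmono ⟨hpa, hab.trans hbq⟩ ⟨hpa.trans hy.1.le, hy.2.trans hbq⟩ hy.1.le)
  linarith

theorem sub_le_mul_sub_of_leftDeriv_monotoneOn {f f' : ℝ → ℝ} {p q a b : ℝ}
    (hf : ContinuousOn f (Icc p q)) (hf' : ∀ x ∈ Ioc p q, HasDerivWithinAt f (f' x) (Iic x) x)
    (hmono : MonotoneOn f' (Icc p q)) (hpa : p ≤ a) (hab : a ≤ b) (hbq : b ≤ q) :
    f b - f a ≤ f' b * (b - a) := by
  have key := le_of_hasDerivWithinAt_Iic_nonneg (f := fun y => f' b * y - f y)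
    (f' := fun y => f' b - f' y) hab
    ((continuous_const.mul continuous_id).continuousOn.sub (hf.mono (Icc_subset_Icc hpa hbq)))
    (fun y hy => (((hasDerivAt_id y).const_mul (f' b)).hasDerivWithinAt.sub
      (hf' y ⟨hpa.trans_lt hy.1, hy.2.trans hbq⟩)).congr_deriv (by ring))
    (fun y hy => sub_nonneg.2 <|
      hmono ⟨hpa.trans hy.1.le, hy.2.trans hbq⟩ ⟨hpa.trans hab, hbq⟩ hy.2)
  linarith

theorem intervalIntegral_le_mul_of_le {f : ℝ → ℝ} {a b c : ℝ} (hab : a ≤ b)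
    (hf : IntervalIntegrable f volume a b) (h : ∀ z ∈ Ioo a b, f z ≤ c) :
    ∫ z in a..b, f z ≤ c * (b - a) := by
  simpa [mul_comm] using
    intervalIntegral.integral_mono_on_of_le_Ioo hab hf intervalIntegrable_const h

theorem mul_le_intervalIntegral_of_le {f : ℝ → ℝ} {a b c : ℝ} (hab : a ≤ b)
    (hf : IntervalIntegrable f volume a b) (h : ∀ z ∈ Ioo a b, c ≤ f z) :
    c * (b - a) ≤ ∫ z in a..b, f z := by
  simpa [mul_comm] using
    intervalIntegral.integral_mono_on_of_le_Ioo hab intervalIntegrable_const hf h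

theorem kload_sub_kload (κ x y : ℝ) : kload κ x - kload κ y = (1 - κ) * (x - y) := by
  unfold kload; ring

theorem kload_le_kload {κ x y : ℝ} (hκ : κ ≤ 1) (hxy : x ≤ y) : kload κ x ≤ kload κ y := by
  rw [← sub_nonneg, kload_sub_kload]
  exact mul_nonneg (sub_nonneg.2 hκ) (sub_nonneg.2 hxy)

theorem kload_mem_Icc {κ x : ℝ} (hκ : κ ∈ Icc (0:ℝ) 1) (hx : x ∈ Icc (0:ℝ) 1) :
    kload κ x ∈ Icc (0:ℝ) 1 := by
  obtain ⟨hκ₀, hκ₁⟩ := hκ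
  obtain ⟨hx₀, hx₁⟩ := hx
  constructor <;> unfold kload <;> nlinarith

theorem le_of_coe_le_leftLimE {α : ℝ → ℝ} {x c : ℝ} (h : (c : EReal) ≤ leftLimE α x) :
    ∀ s ∈ Ico (0:ℝ) x, c ≤ α s := fun s hs =>
  EReal.coe_le_coe_iff.1 (h.trans (iInf₂_le s hs))

theorem le_of_rightLimE_le_coe {α : ℝ → ℝ} {x c : ℝ} (h : rightLimE α x ≤ (c : EReal)) :
    ∀ s ∈ Ioc x (1:ℝ), α s ≤ c := fun s hs =>
  EReal.coe_le_coe_iff.1 ((le_iSup₂ (f := fun t (_ : t ∈ Ioc x (1:ℝ)) => (α t : EReal)) s hs).trans h)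

theorem SCrs_sub_SCrs {κ x y : ℝ} {l α : ℝ → ℝ} (hxy : IntervalIntegrable α volume x y)
    (hy : IntervalIntegrable α volume y 1) :
    SCrs κ l α y - SCrs κ l α x = l (kload κ y) - l (kload κ x) - ∫ z in x..y, α z := by
  rw [SCrs, SCrs, ← intervalIntegral.integral_add_adjacent_intervals hxy hy]
  ring

section Equilibrium

variable {κ xh x : ℝ} {l l' α : ℝ → ℝ}

theorem SCrs_le_SCrs_of_le (hκ : κ ∈ Icc (0:ℝ) 1) (hl : ContinuousOn l (Icc 0 1))
    (hl' : ∀ y ∈ Ioc (0:ℝ) 1, HasDerivWithinAt l (l' y) (Iic y) y)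
    (hl'_mono : MonotoneOn l' (Icc 0 1)) (hα : AntitoneOn α (Icc 0 1))
    (hxh : xh ∈ Icc (0:ℝ) 1) (hx : x ∈ Icc (0:ℝ) 1) (hle : xh ≤ x)
    (hright : ∀ s ∈ Ioo xh x, α s ≤ (1 - κ) * l' (kload κ xh)) :
    SCrs κ l α xh ≤ SCrs κ l α x := by
  have hint := intervalIntegral_le_mul_of_le hle
    ((hα.mono (uIcc_subset_Icc hxh hx)).intervalIntegrable) hright
  have hsec := mul_sub_le_sub_of_leftDeriv_monotoneOn hl hl' hl'_mono
    (kload_mem_Icc hκ hxh).1 (kload_le_kload hκ.2 hle) (kload_mem_Icc hκ hx).2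
  have hsplit := SCrs_sub_SCrs (κ := κ) (l := l)
    (hα.mono (uIcc_subset_Icc hxh hx)).intervalIntegrable
    (hα.mono (uIcc_subset_Icc hx ⟨zero_le_one, le_rfl⟩)).intervalIntegrable
  rw [kload_sub_kload] at hsec
  linarith

theorem SCrs_le_SCrs_of_ge (hκ : κ ∈ Icc (0:ℝ) 1) (hl : ContinuousOn l (Icc 0 1))
    (hl' : ∀ y ∈ Ioc (0:ℝ) 1, HasDerivWithinAt l (l' y) (Iic y) y)
    (hl'_mono : MonotoneOn l' (Icc 0 1)) (hα : AntitoneOn α (Icc 0 1))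
    (hxh : xh ∈ Icc (0:ℝ) 1) (hx : x ∈ Icc (0:ℝ) 1) (hle : x ≤ xh)
    (hleft : ∀ s ∈ Ioo x xh, (1 - κ) * l' (kload κ xh) ≤ α s) :
    SCrs κ l α xh ≤ SCrs κ l α x := by
  have hint := mul_le_intervalIntegral_of_le hle
    ((hα.mono (uIcc_subset_Icc hx hxh)).intervalIntegrable) hleft
  have hsec := sub_le_mul_sub_of_leftDeriv_monotoneOn hl hl' hl'_mono
    (kload_mem_Icc hκ hx).1 (kload_le_kload hκ.2 hle) (kload_mem_Icc hκ hxh).2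
  have hsplit := SCrs_sub_SCrs (κ := κ) (l := l)
    (hα.mono (uIcc_subset_Icc hx hxh)).intervalIntegrable
    (hα.mono (uIcc_subset_Icc hxh ⟨zero_le_one, le_rfl⟩)).intervalIntegrable
  rw [kload_sub_kload] at hsec
  linarith

end Equilibrium

theorem ride_sharing_pigou_general
    (κ τ : ℝ) (hκ : κ ∈ Ico (0:ℝ) 1) (hτ : τ ∈ Ico (0:ℝ) 1)
    (l l' α : ℝ → ℝ)
    (hl_cont : ContinuousOn l (Icc 0 1))
    (hl_deriv : ∀ x ∈ Ioc (0:ℝ) 1, HasDerivWithinAt l (l' x) (Iic x) x)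
    (hl'_mono : MonotoneOn l' (Icc 0 1))
    (hα_anti : AntitoneOn α (Icc 0 1))
    (t : ℝ → ℝ) (ht : ∀ x, t x = ((1 - κ) / (1 - τ)) * l' x)
    (xh : ℝ) (hxh : xh ∈ Icc (0:ℝ) 1)
    (heq_left : (((1 - τ) * t (kload κ xh) : ℝ) : EReal) ≤ leftLimE α xh)
    (heq_right : rightLimE α xh ≤ (((1 - τ) * t (kload κ xh) : ℝ) : EReal)) :
    ∀ x ∈ Icc (0:ℝ) 1, SCrs κ l α xh ≤ SCrs κ l α x := by
  have htoll : (1 - τ) * t (kload κ xh) = (1 - κ) * l' (kload κ xh) := by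
    rw [ht]; field_simp [(sub_pos.2 hτ.2).ne']
  rw [htoll] at heq_left heq_right
  intro x hx
  rcases le_total xh x with hle | hle
  · exact SCrs_le_SCrs_of_le (Ico_subset_Icc_self hκ) hl_cont hl_deriv hl'_mono hα_anti hxh hx hle
      fun s hs => le_of_rightLimE_le_coe heq_right s ⟨hs.1, hs.2.le.trans hx.2⟩
  · exact SCrs_le_SCrs_of_ge (Ico_subset_Icc_self hκ) hl_cont hl_deriv hl'_mono hα_anti hxh hx hle
      fun s hs => le_of_coe_le_leftLimE heq_left s ⟨hx.1.trans hs.1.le, hs.2⟩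

/-- Ride-sharing Pigou theorem: with non-decreasing latency derivative, the toll
`t = ((1-κ)/(1-τ))·l'` makes every equilibrium socially optimal. -/
theorem ride_sharing_pigou
    (κ τ : ℝ) (hκ : κ ∈ Ico (0:ℝ) 1) (hτ : τ ∈ Ico (0:ℝ) 1)
    (l l' α : ℝ → ℝ)
    (hl_cont : ContinuousOn l (Icc 0 1))
    (hl_mono : MonotoneOn l (Icc 0 1))
    (hl_nonneg : ∀ x ∈ Icc (0:ℝ) 1, 0 ≤ l x)
    (hl_deriv : ∀ x ∈ Ioc (0:ℝ) 1, HasDerivWithinAt l (l' x) (Iic x) x)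
    (hl'_mono : MonotoneOn l' (Icc 0 1))
    (hα_anti : AntitoneOn α (Icc 0 1))
    (hα_nonneg : ∀ x ∈ Icc (0:ℝ) 1, 0 ≤ α x)
    (t : ℝ → ℝ) (ht : ∀ x, t x = ((1 - κ) / (1 - τ)) * l' x)
    (xh : ℝ) (hxh : xh ∈ Icc (0:ℝ) 1)
    (heq_left : (((1 - τ) * t (kload κ xh) : ℝ) : EReal) ≤ leftLimE α xh)
    (heq_right : rightLimE α xh ≤ (((1 - τ) * t (kload κ xh) : ℝ) : EReal)) :
    ∀ x ∈ Icc (0:ℝ) 1, SCrs κ l α xh ≤ SCrs κ l α x :=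
  ride_sharing_pigou_general κ τ hκ hτ l l' α hl_cont hl_deriv hl'_mono hα_anti t ht xh hxh heq_left
    heq_right
end

section
/- Train model, Case 1 details: Let Z > 1, Δ = 1/Z, ε ∈ (0, 1/2), δ = εΔ². Define l(x) = 0 on [0, ε-δ], l(x) = (Δ/δ)(x - (ε-δ)) on (ε-δ, ε], l(x) = Δ on (ε, 1]. Let t : [0,1] → ℝ≥0 satisfy l(ε) + t(ε) ≥ 1 and define α(x) = l(ε)+t(ε) for x < 1, α(1) = 0. Then ε is an equilibrium in the train model, SC(ε) = εΔ + (1-ε)(l(ε)+t(ε)) ≥ 1-ε, and SC(1) = Δ, so SC(ε)/SC(x*) ≥ (1-ε)/Δ ≥ (1-ε)·Z for any minimizer x* of SC. -/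
/-!
Since `α` is the constant `c = l(ε) + t(ε)` on `[0, 1)`, its one-sided limits at `ε` are both `c`
and `SC(x) = x·l(x) + (1 - x)·c` for `x ≤ 1`. The ramp `l` has already reached `Δ` at `ε`, so
`SC(ε) ≥ (1 - ε)·c ≥ 1 - ε`, whereas the optimum is at most `SC(1) = l(1) = Δ`.
-/

open Set MeasureTheory

/-- Train-model social cost: `SC(x) = x·l(x) + ∫_x^1 α(z) dz`. -/
noncomputable def SCtrain (l α : ℝ → ℝ) (x : ℝ) : ℝ := x * l x + ∫ z in x..(1:ℝ), α z

lemma intervalIntegral_ite_lt {a x : ℝ} (hx : x ≤ a) (c d : ℝ) :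
    ∫ z in x..a, (if z < a then c else d) = (a - x) * c := by
  rw [intervalIntegral.integral_congr_ae (g := fun _ => c), intervalIntegral.integral_const,
    smul_eq_mul]
  filter_upwards [volume.ae_ne a] with z hz hzI
  rw [uIoc_of_le hx] at hzI
  exact if_pos (hzI.2.lt_of_ne hz)

lemma ramp_eq_of_le {h δ a x : ℝ} (hδ : 0 < δ) (hx : a ≤ x) :
    h / δ * min (max (x - (a - δ)) 0) δ = h := by
  rw [min_eq_right (le_max_of_le_left (by linarith)), div_mul_cancel₀ _ hδ.ne']

lemma ramp_nonneg {h δ a x : ℝ} (hh : 0 ≤ h) (hδ : 0 ≤ δ) :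
    0 ≤ h / δ * min (max (x - (a - δ)) 0) δ :=
  mul_nonneg (div_nonneg hh hδ) (le_min (le_max_right _ _) hδ)

lemma SCtrain_ite_lt_one {l : ℝ → ℝ} {c x : ℝ} (hx : x ≤ 1) :
    SCtrain l (fun z => if z < 1 then c else 0) x = x * l x + (1 - x) * c := by
  rw [SCtrain, intervalIntegral_ite_lt hx]

lemma SCtrain_ite_lt_one_pos {l : ℝ → ℝ} {c x : ℝ} (hc : 0 < c) (hl : 0 ≤ l x) (hl1 : 0 < l 1)
    (hx : x ∈ Icc 0 1) : 0 < SCtrain l (fun z => if z < 1 then c else 0) x := by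
  rw [SCtrain_ite_lt_one hx.2]
  rcases hx.2.eq_or_lt with rfl | hx1
  · simpa using hl1
  · nlinarith [mul_nonneg hx.1 hl]

theorem train_case_one_general
    (Z ε : ℝ) (hZ : 1 < Z) (hε : ε ∈ Ioo (0:ℝ) (1/2))
    (Δ δ : ℝ) (hΔ : Δ = 1 / Z) (hδ : δ = ε * Δ^2)
    (l : ℝ → ℝ) (hl : ∀ x, l x = (Δ/δ) * min (max (x - (ε - δ)) 0) δ)
    (t : ℝ → ℝ) (ht : 1 ≤ l ε + t ε)
    (α : ℝ → ℝ) (hα : ∀ x, α x = if x < 1 then l ε + t ε else 0) :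
    (((l ε + t ε : ℝ) : EReal) ≤ leftLimE α ε ∧
      rightLimE α ε ≤ ((l ε + t ε : ℝ) : EReal)) ∧
    SCtrain l α ε = ε * Δ + (1 - ε) * (l ε + t ε) ∧
    1 - ε ≤ SCtrain l α ε ∧
    SCtrain l α 1 = Δ ∧
    ∀ xstar ∈ Icc (0:ℝ) 1, (∀ x ∈ Icc (0:ℝ) 1, SCtrain l α xstar ≤ SCtrain l α x) →
      SCtrain l α ε / SCtrain l α xstar ≥ (1 - ε) / Δ ∧
      (1 - ε) / Δ ≥ (1 - ε) * Z := by
  obtain ⟨hε0, hε2⟩ := hε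
  have hΔ0 : 0 < Δ := by rw [hΔ]; exact one_div_pos.mpr (by linarith)
  have hδ0 : 0 < δ := by rw [hδ]; positivity
  have hlε : l ε = Δ := by rw [hl, ramp_eq_of_le hδ0 le_rfl]
  have hl1 : l 1 = Δ := by rw [hl, ramp_eq_of_le hδ0 (by linarith)]
  have hα_eq : α = fun z => if z < 1 then l ε + t ε else 0 := funext hα
  have hSCε : SCtrain l α ε = ε * Δ + (1 - ε) * (l ε + t ε) := by
    rw [hα_eq, SCtrain_ite_lt_one (by linarith), hlε]
  have hSC1 : SCtrain l α 1 = Δ := by rw [hα_eq, SCtrain_ite_lt_one le_rfl, hl1]; ring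
  have hSCε_ge : 1 - ε ≤ SCtrain l α ε := by rw [hSCε]; nlinarith
  refine ⟨⟨le_iInf₂ fun s hs => ?_, iSup₂_le fun s _ => ?_⟩, hSCε, hSCε_ge, hSC1,
    fun xstar hxstar hmin => ⟨?_, ?_⟩⟩
  · rw [hα, if_pos (by linarith [hs.2])]
  · rw [hα]
    split_ifs
    · exact le_rfl
    · exact EReal.coe_le_coe_iff.mpr (by linarith)
  · have hpos : 0 < SCtrain l α xstar := by
      rw [hα_eq]
      exact SCtrain_ite_lt_one_pos (by linarith) (by rw [hl]; exact ramp_nonneg hΔ0.le hδ0.le)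
        (hl1 ▸ hΔ0) hxstar
    exact div_le_div₀ (by linarith) hSCε_ge hpos ((hmin 1 ⟨zero_le_one, le_rfl⟩).trans_eq hSC1)
  · rw [hΔ, div_div_eq_mul_div, div_one]

/-- Train model, Case 1: if `l(ε) + t(ε) ≥ 1`, the constant demand `α = l(ε)+t(ε)`
(on `[0,1)`, zero at `1`) makes `ε` an equilibrium of cost at least `(1-ε)·Z`
times the optimum. -/
theorem train_case_one
    (Z ε : ℝ) (hZ : 1 < Z) (hε : ε ∈ Ioo (0:ℝ) (1/2))
    (Δ δ : ℝ) (hΔ : Δ = 1 / Z) (hδ : δ = ε * Δ^2)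
    (l : ℝ → ℝ) (hl : ∀ x, l x = (Δ/δ) * min (max (x - (ε - δ)) 0) δ)
    (t : ℝ → ℝ) (ht_nonneg : ∀ x, 0 ≤ t x) (ht : 1 ≤ l ε + t ε)
    (α : ℝ → ℝ) (hα : ∀ x, α x = if x < 1 then l ε + t ε else 0) :
    (((l ε + t ε : ℝ) : EReal) ≤ leftLimE α ε ∧
      rightLimE α ε ≤ ((l ε + t ε : ℝ) : EReal)) ∧
    SCtrain l α ε = ε * Δ + (1 - ε) * (l ε + t ε) ∧
    1 - ε ≤ SCtrain l α ε ∧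
    SCtrain l α 1 = Δ ∧
    ∀ xstar ∈ Icc (0:ℝ) 1, (∀ x ∈ Icc (0:ℝ) 1, SCtrain l α xstar ≤ SCtrain l α x) →
      SCtrain l α ε / SCtrain l α xstar ≥ (1 - ε) / Δ ∧
      (1 - ε) / Δ ≥ (1 - ε) * Z :=
  train_case_one_general Z ε hZ hε Δ δ hΔ hδ l hl t ht α hα
end

section
/- Train model, Case 2 details: Let Z > 1, Δ = 1/Z, ε ∈ (0, 1/2), δ = εΔ². Define l as in Case 1 (l = 0 on [0,ε-δ], linearly rising to Δ on (ε-δ,ε], constant Δ after). Let t satisfy 0 ≤ l(ε) + t(ε) < 1 and define α(x) = l(ε)+t(ε) for x ≤ ε, α(x) = 0 for x > ε. Then ε is an equilibrium in the train model, SC(ε) = ε·Δ, and SC(ε-δ) = δ·(l(ε)+t(ε)) ≤ δ = εΔ², so SC(ε)/SC(x*) ≥ εΔ/(εΔ²) = Z for any minimizer x* (when l(ε)+t(ε) > 0; if it equals 0 the ratio is infinite since SC(ε) > 0 and SC(ε-δ) = 0). -/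
/-!
The demand is a step of height `c = l(ε) + t(ε)` up to `ε`, so `∫_x^1 α = c (ε - x)` for
`x ≤ ε` and the integral vanishes from `ε` on. Hence `SC(ε) = ε l(ε) = ε Δ`, while the
ramp vanishes at `ε - δ`, so `SC(ε - δ) = δ c ≤ δ = ε Δ²`. When `c > 0` every cost is positive,
and a minimizer costs at most `ε Δ² = ε Δ / Z`.
-/

open Set MeasureTheory

noncomputable def ramp (a w h x : ℝ) : ℝ := h / w * min (max (x - a) 0) w

noncomputable def stepDemand (ε c x : ℝ) : ℝ := if x ≤ ε then c else 0

section Ramp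

variable {a w h x : ℝ}

lemma ramp_of_le (hw : 0 ≤ w) (hx : x ≤ a) : ramp a w h x = 0 := by
  simp [ramp, max_eq_right (sub_nonpos.2 hx), min_eq_left hw]

lemma ramp_of_ge (hw : 0 < w) (hx : a + w ≤ x) : ramp a w h x = h := by
  rw [ramp, max_eq_left (by linarith), min_eq_right (by linarith), div_mul_cancel₀ _ hw.ne']

lemma ramp_nonneg_s17 (hw : 0 ≤ w) (hh : 0 ≤ h) : 0 ≤ ramp a w h x :=
  mul_nonneg (div_nonneg hh hw) (le_min (le_max_right _ _) hw)

end Ramp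

section StepDemand

variable {ε c : ℝ}

lemma stepDemand_eq_indicator : stepDemand ε c = (Iic ε).indicator fun _ => c := by
  ext x
  simp [stepDemand, indicator_apply]

lemma intervalIntegrable_stepDemand (a b : ℝ) :
    IntervalIntegrable (stepDemand ε c) volume a b := by
  rw [intervalIntegrable_iff, stepDemand_eq_indicator]
  exact (integrableOn_const measure_Ioc_lt_top.ne).indicator measurableSet_Iic

lemma integral_stepDemand_of_ge {a b : ℝ} (ha : ε ≤ a) (hb : ε ≤ b) :
    ∫ z in a..b, stepDemand ε c z = 0 := by
  have : ∀ᵐ z, z ∈ uIoc a b → stepDemand ε c z = 0 := by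
    filter_upwards with z hz
    exact if_neg (not_le.2 ((le_min ha hb).trans_lt hz.1))
  rw [intervalIntegral.integral_congr_ae this, intervalIntegral.integral_zero]

lemma integral_stepDemand_of_le {a : ℝ} (ha : a ≤ ε) (hε : ε ≤ 1) :
    ∫ z in a..1, stepDemand ε c z = c * (ε - a) := by
  have hleft : ∫ z in a..ε, stepDemand ε c z = ∫ _ in a..ε, c :=
    intervalIntegral.integral_congr fun z hz => if_pos (by rw [uIcc_of_le ha] at hz; exact hz.2)
  rw [← intervalIntegral.integral_add_adjacent_intervals (intervalIntegrable_stepDemand a ε)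
    (intervalIntegrable_stepDemand ε 1), hleft, integral_stepDemand_of_ge le_rfl hε,
    intervalIntegral.integral_const, smul_eq_mul, add_zero, mul_comm]

lemma le_leftLimE_stepDemand : (c : EReal) ≤ leftLimE (stepDemand ε c) ε :=
  le_iInf₂ fun _ hz => by rw [stepDemand, if_pos hz.2.le]

lemma rightLimE_stepDemand_le_zero : rightLimE (stepDemand ε c) ε ≤ 0 :=
  iSup₂_le fun _ hz => by rw [stepDemand, if_neg (not_le.2 hz.1)]; rfl

variable {l : ℝ → ℝ} {x : ℝ}

lemma SCtrain_stepDemand_of_le (hx : x ≤ ε) (hε : ε ≤ 1) :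
    SCtrain l (stepDemand ε c) x = x * l x + c * (ε - x) := by
  rw [SCtrain, integral_stepDemand_of_le hx hε]

lemma SCtrain_stepDemand_of_ge (hx : ε ≤ x) (hε : ε ≤ 1) :
    SCtrain l (stepDemand ε c) x = x * l x := by
  rw [SCtrain, integral_stepDemand_of_ge hx hε, add_zero]

lemma SCtrain_stepDemand_pos (hε0 : 0 < ε) (hε1 : ε ≤ 1) (hc : 0 < c) (hl0 : ∀ x, 0 ≤ l x)
    (hlpos : ∀ x, ε ≤ x → 0 < l x) (hx : 0 ≤ x) : 0 < SCtrain l (stepDemand ε c) x := by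
  rcases lt_or_ge x ε with hxε | hxε
  · rw [SCtrain_stepDemand_of_le hxε.le hε1]
    nlinarith [mul_nonneg hx (hl0 x)]
  · rw [SCtrain_stepDemand_of_ge hxε hε1]
    exact mul_pos (hε0.trans_le hxε) (hlpos x hxε)

end StepDemand

lemma scale_bounds {Z ε Δ δ : ℝ} (hZ : 1 < Z) (hε : 0 < ε) (hΔ : Δ = 1 / Z)
    (hδ : δ = ε * Δ ^ 2) : 0 < Δ ∧ 0 < δ ∧ δ < ε ∧ Z * δ = ε * Δ := by
  have hZΔ : Z * Δ = 1 := by rw [hΔ]; field_simp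
  have hΔ0 : 0 < Δ := by rw [hΔ]; positivity
  have hΔ1 : Δ < 1 := by nlinarith
  refine ⟨hΔ0, by rw [hδ]; positivity, ?_, by rw [hδ]; linear_combination ε * Δ * hZΔ⟩
  rw [hδ]
  nlinarith [mul_pos hε (mul_pos hΔ0 (sub_pos.2 hΔ1))]

/-- Train model, Case 2: if `l(ε) + t(ε) < 1`, the demand `α = l(ε)+t(ε)` on
`[0,ε]` and `0` after makes `ε` an equilibrium of cost at least `Z` times the
optimum (infinite ratio if `l(ε)+t(ε) = 0`). -/
theorem train_case_two
    (Z ε : ℝ) (hZ : 1 < Z) (hε : ε ∈ Ioo (0:ℝ) (1/2))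
    (Δ δ : ℝ) (hΔ : Δ = 1 / Z) (hδ : δ = ε * Δ^2)
    (l : ℝ → ℝ) (hl : ∀ x, l x = (Δ/δ) * min (max (x - (ε - δ)) 0) δ)
    (t : ℝ → ℝ) (ht_nonneg : ∀ x, 0 ≤ t x) (ht : l ε + t ε < 1)
    (α : ℝ → ℝ) (hα : ∀ x, α x = if x ≤ ε then l ε + t ε else 0) :
    (((l ε + t ε : ℝ) : EReal) ≤ leftLimE α ε ∧
      rightLimE α ε ≤ ((l ε + t ε : ℝ) : EReal)) ∧
    SCtrain l α ε = ε * Δ ∧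
    SCtrain l α (ε - δ) = δ * (l ε + t ε) ∧
    SCtrain l α (ε - δ) ≤ δ ∧
    (0 < l ε + t ε →
      ∀ xstar ∈ Icc (0:ℝ) 1, (∀ x ∈ Icc (0:ℝ) 1, SCtrain l α xstar ≤ SCtrain l α x) →
        SCtrain l α ε / SCtrain l α xstar ≥ Z) ∧
    (l ε + t ε = 0 → SCtrain l α (ε - δ) = 0 ∧ 0 < SCtrain l α ε) := by
  obtain ⟨hε0, hε1⟩ := hε
  obtain ⟨hΔ0, hδ0, hδε, hZδ⟩ := scale_bounds hZ hε0 hΔ hδ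
  have hl' : l = ramp (ε - δ) δ Δ := funext hl
  have hl_of_ge : ∀ x, ε ≤ x → l x = Δ := fun x hx => by
    rw [hl', ramp_of_ge hδ0 (by linarith)]
  have hlεδ : l (ε - δ) = 0 := by rw [hl', ramp_of_le hδ0.le le_rfl]
  have hα' : α = stepDemand ε (l ε + t ε) := funext hα
  have hc0 : 0 ≤ l ε + t ε := by linarith [hl_of_ge ε le_rfl, ht_nonneg ε]
  have hSCε : SCtrain l α ε = ε * Δ := by
    rw [hα', SCtrain_stepDemand_of_ge le_rfl (by linarith), hl_of_ge ε le_rfl]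
  have hSCεδ : SCtrain l α (ε - δ) = δ * (l ε + t ε) := by
    rw [hα', SCtrain_stepDemand_of_le (by linarith) (by linarith), hlεδ]
    ring
  have hSCεδ_le : SCtrain l α (ε - δ) ≤ δ := by rw [hSCεδ]; nlinarith
  refine ⟨⟨hα' ▸ le_leftLimE_stepDemand, hα' ▸ rightLimE_stepDemand_le_zero.trans
    (by exact_mod_cast hc0)⟩, hSCε, hSCεδ, hSCεδ_le, ?_, ?_⟩
  · intro hc xstar hxstar hmin
    have hpos : 0 < SCtrain l α xstar := hα' ▸ SCtrain_stepDemand_pos hε0 (by linarith) hc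
      (fun x => hl' ▸ ramp_nonneg_s17 hδ0.le hΔ0.le) (fun x hx => hl_of_ge x hx ▸ hΔ0) hxstar.1
    have hle : SCtrain l α xstar ≤ δ := (hmin (ε - δ) ⟨by linarith, by linarith⟩).trans hSCεδ_le
    rw [hSCε, ge_iff_le, le_div_iff₀ hpos, ← hZδ]
    gcongr
  · intro h0
    exact ⟨by rw [hSCεδ, h0, mul_zero], by rw [hSCε]; positivity⟩
end
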